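/- arXiv:1207.0166 — 7 statements merged into one kernel-verified Lean document; each statement's English description precedes it below -/
import Mathlib

section
/- Fix probabilities p_1,...,p_K ∈ [0,1], a ∈ [0,1), and costs c(j,s) with 1 ≥ c(1,s) ≥ c(2,s) ≥ ... ≥ c(s,s) ≥ 0 for each s. Define the expected loss of an ordered subset Y = (j_1,...,j_s) of distinct elements of [K] as E(Y) = (1−a)·Σ_{i∈Y}( c(j_i,s) − (a/(1−a)+c(j_i,s))·p_i ). Then for each fixed size s, an ordered subset minimizing E over all ordered subsets of size s is obtained by taking the s classes with largest p_i, listed in nonincreasing order of p_i. -/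
/-!
With `w i = a / (1 - a) + c (i + 1) s`, the loss of a list `l` of length `s` is
`(1 - a) * (∑ i, c (i + 1) s - ∑ i, w i * p l[i])`, and the weights `w` are nonnegative and
nonincreasing. By Abel summation it therefore suffices that each prefix sum of `p` along `l` is
at most the corresponding prefix sum along `lstar`; this holds because the first `m` entries of
`lstar` carry the `m` largest values of `p`, so no `m` distinct classes have a larger `p`-sum.
-/

open Finset

theorem List.sum_range_getD_eq_sum_take {M : Type*} [AddCommMonoid M] (L : List M) (m : ℕ) :
    ∑ i ∈ Finset.range m, L.getD i 0 = (L.take m).sum := by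
  induction L generalizing m with
  | nil => simp
  | cons x L ih =>
    cases m with
    | zero => simp
    | succ m => simp [Finset.sum_range_succ', ← ih, add_comm]

theorem Finset.sum_range_mul_le_sum_range_mul_of_sum_range_le {R : Type*} [CommRing R]
    [LinearOrder R] [IsStrictOrderedRing R] {n : ℕ} {w f g : ℕ → R}
    (hw_nonneg : ∀ i < n, 0 ≤ w i) (hw_anti : ∀ i, i + 1 < n → w (i + 1) ≤ w i)
    (hfg : ∀ m ≤ n, ∑ i ∈ range m, f i ≤ ∑ i ∈ range m, g i) :
    ∑ i ∈ range n, w i * f i ≤ ∑ i ∈ range n, w i * g i := by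
  rcases n.eq_zero_or_pos with rfl | hn
  · simp
  have hf := sum_range_by_parts w f n
  have hg := sum_range_by_parts w g n
  simp only [smul_eq_mul] at hf hg
  rw [hf, hg]
  refine sub_le_sub (mul_le_mul_of_nonneg_left (hfg n le_rfl) (hw_nonneg _ (by omega)))
    (sum_le_sum fun i hi => mul_le_mul_of_nonpos_left (hfg _ ?_) (sub_nonpos.2 (hw_anti i ?_))) <;>
  · rw [mem_range] at hi
    omega

section TopPrefix

variable {α R : Type*} {p : α → R} {L : List α}

theorem List.mem_take_of_apply_getElem_lt [Preorder R]
    (hsorted : L.Pairwise (fun i k => p k ≤ p i)) (htop : ∀ i ∈ L, ∀ j, j ∉ L → p j ≤ p i)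
    {m : ℕ} (hm : m < L.length) {y : α}
    (hy : p L[m] < p y) : y ∈ L.take m := by
  have hyL : y ∈ L := by
    by_contra hyL
    exact (htop _ (L.getElem_mem hm) y hyL).not_gt hy
  obtain ⟨j, hj, rfl⟩ := List.getElem_of_mem hyL
  have hjm : j < m := by
    by_contra! hmj
    rcases hmj.lt_or_eq with hmj | rfl
    · exact (List.pairwise_iff_getElem.1 hsorted m j hm hj hmj).not_gt hy
    · exact lt_irrefl _ hy
  rw [← List.getElem_take (j := m) (h := by simp; omega)]
  exact List.getElem_mem _

theorem List.sum_le_sum_take_map_of_card_eq [DecidableEq α] [AddCommMonoid R] [LinearOrder R]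
    [IsOrderedAddMonoid R] (hsorted : L.Pairwise (fun i k => p k ≤ p i))
    (htop : ∀ i ∈ L, ∀ j, j ∉ L → p j ≤ p i) {m : ℕ} (hmL : m ≤ L.length) (S : Finset α)
    (hS : S.card = m) : ∑ x ∈ S, p x ≤ ((L.take m).map p).sum := by
  induction m generalizing S with
  | zero => simp [Finset.card_eq_zero.1 hS]
  | succ m ih =>
    obtain ⟨x₀, hx₀S, hx₀min⟩ := S.exists_min_image p (Finset.card_pos.1 (by omega))
    have hx₀ : p x₀ ≤ p L[m] := by
      by_contra! hlt
      have hsub : S ⊆ (L.take m).toFinset := fun y hy => List.mem_toFinset.2 <|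
        mem_take_of_apply_getElem_lt hsorted htop _ (hlt.trans_le (hx₀min y hy))
      have := (card_le_card hsub).trans ((L.take m).toFinset_card_le.trans (L.length_take_le m))
      omega
    calc ∑ x ∈ S, p x = ∑ x ∈ S.erase x₀, p x + p x₀ := (sum_erase_add S p hx₀S).symm
      _ ≤ ((L.take m).map p).sum + p L[m] :=
        add_le_add (ih (by omega) _ (by rw [card_erase_of_mem hx₀S, hS]; rfl)) hx₀
      _ = ((L.take (m + 1)).map p).sum := by
        rw [List.map_take, List.map_take, List.sum_take_succ _ _ (by simpa using hmL)]
        simp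

theorem List.sum_take_map_le_of_nodup [DecidableEq α] [AddCommMonoid R] [LinearOrder R]
    [IsOrderedAddMonoid R] (hsorted : L.Pairwise (fun i k => p k ≤ p i))
    (htop : ∀ i ∈ L, ∀ j, j ∉ L → p j ≤ p i) {t : List α} (ht : t.Nodup) {m : ℕ}
    (hmt : m ≤ t.length) (hmL : m ≤ L.length) :
    ((t.take m).map p).sum ≤ ((L.take m).map p).sum := by
  have hnd := ht.sublist (t.take_sublist m)
  rw [← List.sum_toFinset p hnd]
  refine sum_le_sum_take_map_of_card_eq hsorted htop hmL _ ?_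
  rw [List.toFinset_card_of_nodup hnd, List.length_take]
  omega

end TopPrefix

theorem bayes_optimal_fixed_size_general (K : ℕ) (p : Fin K → ℝ)
    (a : ℝ) (ha0 : 0 ≤ a) (ha1 : a < 1)
    (c : ℕ → ℕ → ℝ) (hc01 : ∀ j s, 0 ≤ c j s ∧ c j s ≤ 1)
    (hcmono : ∀ s j j', 1 ≤ j → j ≤ j' → j' ≤ s → c j' s ≤ c j s)
    (s : ℕ)
    (E : List (Fin K) → ℝ)
    (hE : ∀ l : List (Fin K),
      E l = (1 - a) * ∑ idx : Fin l.length,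
        (c (idx + 1) l.length - (a / (1 - a) + c (idx + 1) l.length) * p (l.get idx)))
    (lstar : List (Fin K)) (hlen : lstar.length = s)
    -- `lstar` is sorted in nonincreasing order of `p`
    (hsorted : lstar.Pairwise (fun i k => p k ≤ p i))
    -- `lstar` consists of the `s` classes with largest `p`
    (htop : ∀ i ∈ lstar, ∀ j : Fin K, j ∉ lstar → p j ≤ p i) :
    ∀ l : List (Fin K), l.Nodup → l.length = s → E lstar ≤ E l := by
  intro l hnd hl
  set w : ℕ → ℝ := fun i => a / (1 - a) + c (i + 1) s
  have hE_range : ∀ t : List (Fin K), t.length = s →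
      E t = (1 - a) * (∑ i ∈ range s, c (i + 1) s - ∑ i ∈ range s, w i * (t.map p).getD i 0) := by
    rintro t rfl
    rw [hE, ← sum_sub_distrib, ← Fin.sum_univ_eq_sum_range]
    simp [w]
  have hw_nonneg : ∀ i < s, 0 ≤ w i := fun i _ =>
    add_nonneg (div_nonneg ha0 (by linarith)) (hc01 _ _).1
  have hw_anti : ∀ i, i + 1 < s → w (i + 1) ≤ w i := fun i hi =>
    add_le_add_right (hcmono s (i + 1) (i + 2) (by omega) (by omega) (by omega)) _
  have hweighted : ∑ i ∈ range s, w i * (l.map p).getD i 0 ≤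
      ∑ i ∈ range s, w i * (lstar.map p).getD i 0 := by
    refine sum_range_mul_le_sum_range_mul_of_sum_range_le hw_nonneg hw_anti fun m hm => ?_
    simp only [List.sum_range_getD_eq_sum_take, ← List.map_take]
    exact List.sum_take_map_le_of_nodup hsorted htop hnd (by omega) (by omega)
  rw [hE_range l hl, hE_range lstar hlen]
  gcongr

/-- for each fixed size `s`, the expected loss over ordered subsets of size `s`
is minimized by listing the `s` classes with largest `p i` in nonincreasing order of `p`. -/
theorem bayes_optimal_fixed_size (K : ℕ) (p : Fin K → ℝ)
    (hp : ∀ i, 0 ≤ p i ∧ p i ≤ 1)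
    (a : ℝ) (ha0 : 0 ≤ a) (ha1 : a < 1)
    (c : ℕ → ℕ → ℝ) (hc01 : ∀ j s, 0 ≤ c j s ∧ c j s ≤ 1)
    (hcmono : ∀ s j j', 1 ≤ j → j ≤ j' → j' ≤ s → c j' s ≤ c j s)
    (s : ℕ) (hs : s ≤ K)
    (E : List (Fin K) → ℝ)
    (hE : ∀ l : List (Fin K),
      E l = (1 - a) * ∑ idx : Fin l.length,
        (c (idx + 1) l.length - (a / (1 - a) + c (idx + 1) l.length) * p (l.get idx)))
    (lstar : List (Fin K)) (hnodup : lstar.Nodup) (hlen : lstar.length = s)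
    -- `lstar` is sorted in nonincreasing order of `p`
    (hsorted : lstar.Pairwise (fun i k => p k ≤ p i))
    -- `lstar` consists of the `s` classes with largest `p`
    (htop : ∀ i ∈ lstar, ∀ j : Fin K, j ∉ lstar → p j ≤ p i) :
    ∀ l : List (Fin K), l.Nodup → l.length = s → E lstar ≤ E l :=
  bayes_optimal_fixed_size_general K p a ha0 ha1 c hc01 hcmono s E hE lstar hlen hsorted htop
end

section
/- Let L : [−R,R] → ℝ₊ be twice differentiable with L''(x) ≥ c'' > 0 for all x, let Δ, Δ̂ ∈ [−R,R] and p = L'(−Δ)/(L'(Δ)+L'(−Δ)). Then p·(L(Δ̂)−L(Δ)) + (1−p)·(L(−Δ̂)−L(−Δ)) ≥ (c''/2)·(Δ̂−Δ)². -/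
/-!
Strong convexity gives the quadratic tangent bound
`L y ≥ L x + L' x * (y - x) + c''/2 * (y - x)^2` at `Δ` and at `-Δ`. The weight `p` is chosen so
that `p * L' Δ = (1 - p) * L' (-Δ)`, hence the first-order terms cancel in the mixture, and the two
quadratic terms add up to `c''/2 * (Δhat - Δ)^2`.
-/

open Set

theorem ConvexOn.add_mul_sub_le_of_hasDerivAt {S : Set ℝ} {f : ℝ → ℝ} {f' x y : ℝ}
    (hf : ConvexOn ℝ S f) (hx : x ∈ S) (hy : y ∈ S) (hf' : HasDerivAt f f' x) :
    f x + f' * (y - x) ≤ f y := by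
  rcases lt_trichotomy x y with hxy | rfl | hyx
  · have := hf.le_slope_of_hasDerivAt hx hy hxy hf'
    rw [slope_def_field, le_div_iff₀ (sub_pos.2 hxy)] at this
    linarith
  · simp
  · have := hf.slope_le_of_hasDerivAt hy hx hyx hf'
    rw [slope_def_field, div_le_iff₀ (sub_pos.2 hyx)] at this
    linarith

theorem HasDerivAt.sub_half_mul_sq {f : ℝ → ℝ} {f' x : ℝ} (hf : HasDerivAt f f' x) (c : ℝ) :
    HasDerivAt (fun x => f x - c / 2 * x ^ 2) (f' - c * x) x :=
  (hf.sub ((hasDerivAt_pow 2 x).const_mul (c / 2))).congr_deriv (by ring)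

section SecondDerivativeBound

variable {D : Set ℝ} {f f' f'' : ℝ → ℝ} {c : ℝ}

theorem convexOn_sub_half_mul_sq_of_le_hasDerivAt2 (hD : Convex ℝ D)
    (hf : ∀ x ∈ D, HasDerivAt f (f' x) x) (hf' : ∀ x ∈ D, HasDerivAt f' (f'' x) x)
    (hc : ∀ x ∈ D, c ≤ f'' x) :
    ConvexOn ℝ D (fun x => f x - c / 2 * x ^ 2) := by
  have hg (x) (hx : x ∈ D) := (hf x hx).sub_half_mul_sq c
  have hg' (x) (hx : x ∈ D) : HasDerivAt (fun x => f' x - c * x) (f'' x - c) x :=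
    ((hf' x hx).sub ((hasDerivAt_id' x).const_mul c)).congr_deriv (by ring)
  refine convexOn_of_hasDerivWithinAt2_nonneg hD
    (fun x hx => (hg x hx).continuousAt.continuousWithinAt)
    (fun x hx => (hg x (interior_subset hx)).hasDerivWithinAt)
    (fun x hx => (hg' x (interior_subset hx)).hasDerivWithinAt) fun x hx => ?_
  exact sub_nonneg.2 (hc x (interior_subset hx))

theorem add_mul_sub_add_sq_le_of_le_hasDerivAt2 (hD : Convex ℝ D)
    (hf : ∀ x ∈ D, HasDerivAt f (f' x) x) (hf' : ∀ x ∈ D, HasDerivAt f' (f'' x) x)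
    (hc : ∀ x ∈ D, c ≤ f'' x) {x y : ℝ} (hx : x ∈ D) (hy : y ∈ D) :
    f x + f' x * (y - x) + c / 2 * (y - x) ^ 2 ≤ f y := by
  have := (convexOn_sub_half_mul_sq_of_le_hasDerivAt2 hD hf hf' hc).add_mul_sub_le_of_hasDerivAt
    hx hy ((hf x hx).sub_half_mul_sq c)
  linarith

end SecondDerivativeBound

theorem mixture_excess_lower_bound_general (R : ℝ)
    (L L' L'' : ℝ → ℝ) (c'' : ℝ)
    (hderiv : ∀ x ∈ Icc (-R) R, HasDerivAt L (L' x) x)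
    (hderiv2 : ∀ x ∈ Icc (-R) R, HasDerivAt L' (L'' x) x)
    (hsc : ∀ x ∈ Icc (-R) R, c'' ≤ L'' x)
    (Δ Δhat : ℝ) (hΔ : Δ ∈ Icc (-R) R) (hΔhat : Δhat ∈ Icc (-R) R)
    (hden : L' Δ + L' (-Δ) ≠ 0)
    (p : ℝ) (hp : p = L' (-Δ) / (L' Δ + L' (-Δ)))
    (hp01 : 0 ≤ p ∧ p ≤ 1) :
    c'' / 2 * (Δhat - Δ) ^ 2
      ≤ p * (L Δhat - L Δ) + (1 - p) * (L (-Δhat) - L (-Δ)) := by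
  have tangent {x y} := add_mul_sub_add_sq_le_of_le_hasDerivAt2 (convex_Icc (-R) R)
    hderiv hderiv2 hsc (x := x) (y := y)
  have hneg {x} (hx : x ∈ Icc (-R) R) : -x ∈ Icc (-R) R := ⟨neg_le_neg hx.2, by linarith [hx.1]⟩
  have at_Δ := tangent hΔ hΔhat
  have at_negΔ := tangent (hneg hΔ) (hneg hΔhat)
  have balance : p * L' Δ = (1 - p) * L' (-Δ) := by
    rw [hp]
    field_simp
    ring
  nlinarith [mul_le_mul_of_nonneg_left at_Δ hp01.1,
    mul_le_mul_of_nonneg_left at_negΔ (sub_nonneg.2 hp01.2), congrArg (· * (Δhat - Δ)) balance]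

/-- strong-convexity lower bound on the mixture excess loss. -/
theorem mixture_excess_lower_bound (R : ℝ) (hR : 0 < R)
    (L L' L'' : ℝ → ℝ) (c'' : ℝ) (hc'' : 0 < c'')
    (hL0 : ∀ x ∈ Icc (-R) R, 0 ≤ L x)
    (hderiv : ∀ x ∈ Icc (-R) R, HasDerivAt L (L' x) x)
    (hderiv2 : ∀ x ∈ Icc (-R) R, HasDerivAt L' (L'' x) x)
    (hsc : ∀ x ∈ Icc (-R) R, c'' ≤ L'' x)
    (Δ Δhat : ℝ) (hΔ : Δ ∈ Icc (-R) R) (hΔhat : Δhat ∈ Icc (-R) R)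
    (hden : L' Δ + L' (-Δ) ≠ 0)
    (p : ℝ) (hp : p = L' (-Δ) / (L' Δ + L' (-Δ)))
    (hp01 : 0 ≤ p ∧ p ≤ 1) :
    c'' / 2 * (Δhat - Δ) ^ 2
      ≤ p * (L Δhat - L Δ) + (1 - p) * (L (-Δhat) - L (-Δ)) :=
  mixture_excess_lower_bound_general R L L' L'' c'' hderiv hderiv2 hsc Δ Δhat hΔ hΔhat hden p hp
    hp01
end

section
/- Let L : [−R,R] → ℝ₊ be twice differentiable with (L'(x))² ≤ c' and L''(x) ≥ c'' > 0 for all x ∈ [−R,R], and let p ∈ [0,1] equal L'(−Δ)/(L'(Δ)+L'(−Δ)) for some Δ ∈ [−R,R]. Let S be a {−1,+1}-valued random variable with P(S=1) = p. Then for any Δ̂ ∈ [−R,R], Var(L(S·Δ̂) − L(S·Δ)) ≤ (2c'/c'')·E[L(S·Δ̂) − L(S·Δ)]. -/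
open Set

/-!
Write `d = Δhat - Δ`. Strong convexity bounds each of `L(±Δhat) - L(±Δ)` below by its tangent
term plus `c''/2 · d²`, and the weight `p` is exactly the one for which the two tangent terms
cancel in expectation, so `E ≥ c''/2 · d²`. The gradient bound makes both values of the
difference at most `√c' · |d|` in absolute value, and a variable taking two values `a`, `b` has
variance at most `(a - b)² / 4`, so `Var ≤ c' · d²`.
-/

lemma ConvexOn.mul_sub_le_sub_of_hasDerivAt {S : Set ℝ} {f : ℝ → ℝ} {f' x y : ℝ}
    (hf : ConvexOn ℝ S f) (hx : x ∈ S) (hy : y ∈ S) (hderiv : HasDerivAt f f' x) :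
    f' * (y - x) ≤ f y - f x := by
  rcases lt_trichotomy x y with hxy | rfl | hyx
  · have hslope := hf.le_slope_of_hasDerivAt hx hy hxy hderiv
    rw [slope_def_field, le_div_iff₀ (sub_pos.2 hxy)] at hslope
    exact hslope
  · simp
  · have hslope := hf.slope_le_of_hasDerivAt hy hx hyx hderiv
    rw [slope_def_field, div_le_iff₀ (sub_pos.2 hyx)] at hslope
    linarith

lemma Convex.mul_sub_add_mul_sq_le_sub_of_le_deriv2 {D : Set ℝ} (hD : Convex ℝ D)
    {f f' f'' : ℝ → ℝ} {m x y : ℝ}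
    (hf : ∀ t ∈ D, HasDerivAt f (f' t) t) (hf' : ∀ t ∈ D, HasDerivAt f' (f'' t) t)
    (hm : ∀ t ∈ D, m ≤ f'' t) (hx : x ∈ D) (hy : y ∈ D) :
    f' x * (y - x) + m / 2 * (y - x) ^ 2 ≤ f y - f x := by
  have hg : ∀ t ∈ D, HasDerivAt (fun s ↦ f s - m / 2 * s ^ 2) (f' t - m * t) t := fun t ht ↦
    ((hf t ht).sub ((hasDerivAt_pow 2 t).const_mul (m / 2))).congr_deriv (by ring)
  have hg' : ∀ t ∈ D, HasDerivAt (fun s ↦ f' s - m * s) (f'' t - m) t := fun t ht ↦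
    ((hf' t ht).sub ((hasDerivAt_id t).const_mul m)).congr_deriv (by ring)
  have hconv : ConvexOn ℝ D (fun s ↦ f s - m / 2 * s ^ 2) :=
    convexOn_of_hasDerivWithinAt2_nonneg hD
      (fun t ht ↦ (hg t ht).continuousAt.continuousWithinAt)
      (fun t ht ↦ (hg t (interior_subset ht)).hasDerivWithinAt)
      (fun t ht ↦ (hg' t (interior_subset ht)).hasDerivWithinAt)
      (fun t ht ↦ sub_nonneg.2 (hm t (interior_subset ht)))
  have htangent := hconv.mul_sub_le_sub_of_hasDerivAt hx hy (hg x hx)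
  linarith

lemma Convex.sq_sub_le_mul_sq_of_sq_deriv_le {D : Set ℝ} (hD : Convex ℝ D)
    {f f' : ℝ → ℝ} {C x y : ℝ}
    (hf : ∀ t ∈ D, HasDerivAt f (f' t) t) (hC : ∀ t ∈ D, f' t ^ 2 ≤ C)
    (hx : x ∈ D) (hy : y ∈ D) :
    (f y - f x) ^ 2 ≤ C * (y - x) ^ 2 := by
  have hlip : |f y - f x| ≤ √C * |y - x| :=
    hD.norm_image_sub_le_of_norm_hasDerivWithin_le (fun t ht ↦ (hf t ht).hasDerivWithinAt)
      (fun t ht ↦ Real.abs_le_sqrt (hC t ht)) hx hy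
  have hC₀ : 0 ≤ C := (sq_nonneg _).trans (hC x hx)
  calc (f y - f x) ^ 2 = |f y - f x| ^ 2 := (sq_abs _).symm
    _ ≤ (√C * |y - x|) ^ 2 := pow_le_pow_left₀ (abs_nonneg _) hlip 2
    _ = C * (y - x) ^ 2 := by rw [mul_pow, Real.sq_sqrt hC₀, sq_abs]

lemma two_point_variance_le (p a b : ℝ) :
    p * a ^ 2 + (1 - p) * b ^ 2 - (p * a + (1 - p) * b) ^ 2 ≤ (a - b) ^ 2 / 4 := by
  have hvar : p * a ^ 2 + (1 - p) * b ^ 2 - (p * a + (1 - p) * b) ^ 2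
      = p * (1 - p) * (a - b) ^ 2 := by ring
  rw [hvar]
  nlinarith [sq_nonneg (p - 1 / 2), sq_nonneg (a - b)]

theorem variance_le_expectation_general (R : ℝ)
    (L L' L'' : ℝ → ℝ) (c' c'' : ℝ) (hc'' : 0 < c'')
    (hderiv : ∀ x ∈ Icc (-R) R, HasDerivAt L (L' x) x)
    (hderiv2 : ∀ x ∈ Icc (-R) R, HasDerivAt L' (L'' x) x)
    (hgrad : ∀ x ∈ Icc (-R) R, (L' x) ^ 2 ≤ c')
    (hsc : ∀ x ∈ Icc (-R) R, c'' ≤ L'' x)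
    (Δ Δhat : ℝ) (hΔ : Δ ∈ Icc (-R) R) (hΔhat : Δhat ∈ Icc (-R) R)
    (hden : L' Δ + L' (-Δ) ≠ 0)
    (p : ℝ) (hp : p = L' (-Δ) / (L' Δ + L' (-Δ)))
    (hp01 : 0 ≤ p ∧ p ≤ 1)
    -- X s = L(s·Δhat) - L(s·Δ), its mean and variance under P(S=1)=p, P(S=-1)=1-p
    (X : ℝ → ℝ) (hX : ∀ s : ℝ, X s = L (s * Δhat) - L (s * Δ))
    (EX VarX : ℝ)
    (hEX : EX = p * X 1 + (1 - p) * X (-1))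
    (hVarX : VarX = p * (X 1) ^ 2 + (1 - p) * (X (-1)) ^ 2 - EX ^ 2) :
    VarX ≤ (2 * c' / c'') * EX := by
  have hD : Convex ℝ (Icc (-R) R) := convex_Icc (-R) R
  have hnegΔ : -Δ ∈ Icc (-R) R := ⟨neg_le_neg hΔ.2, neg_le.1 hΔ.1⟩
  have hnegΔhat : -Δhat ∈ Icc (-R) R := ⟨neg_le_neg hΔhat.2, neg_le.1 hΔhat.1⟩
  have hX₁ : X 1 = L Δhat - L Δ := by simp [hX]
  have hX₂ : X (-1) = L (-Δhat) - L (-Δ) := by simp [hX]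
  have hsub : -Δhat - -Δ = -(Δhat - Δ) := by ring
  have hlow₁ := hD.mul_sub_add_mul_sq_le_sub_of_le_deriv2 hderiv hderiv2 hsc hΔ hΔhat
  have hlow₂ := hD.mul_sub_add_mul_sq_le_sub_of_le_deriv2 hderiv hderiv2 hsc hnegΔ hnegΔhat
  have hup₁ := hD.sq_sub_le_mul_sq_of_sq_deriv_le hderiv hgrad hΔ hΔhat
  have hup₂ := hD.sq_sub_le_mul_sq_of_sq_deriv_le hderiv hgrad hnegΔ hnegΔhat
  rw [hsub, neg_sq] at hlow₂ hup₂
  rw [← hX₁] at hlow₁ hup₁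
  rw [← hX₂] at hlow₂ hup₂
  have hbalance : p * L' Δ = (1 - p) * L' (-Δ) := by
    rw [hp]; field_simp; ring
  have hmean : c'' / 2 * (Δhat - Δ) ^ 2 ≤ EX := by
    rw [hEX]
    linarith [mul_le_mul_of_nonneg_left hlow₁ hp01.1,
      mul_le_mul_of_nonneg_left hlow₂ (sub_nonneg.2 hp01.2),
      congrArg (· * (Δhat - Δ)) hbalance]
  have hvar : VarX ≤ c' * (Δhat - Δ) ^ 2 := by
    rw [hVarX, hEX]
    linarith [two_point_variance_le p (X 1) (X (-1)),
      sq_nonneg (X 1 + X (-1))]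
  have hc' : 0 ≤ c' := (sq_nonneg _).trans (hgrad Δ hΔ)
  calc VarX ≤ c' * (Δhat - Δ) ^ 2 := hvar
    _ = 2 * c' / c'' * (c'' / 2 * (Δhat - Δ) ^ 2) := by field_simp
    _ ≤ 2 * c' / c'' * EX := by gcongr

/-- the variance of the loss difference is bounded by a constant times its
expectation.  The random sign `S` takes value `1` with probability `p` and `-1` with
probability `1-p`; expectation and variance are written out explicitly. -/
theorem variance_le_expectation (R : ℝ) (hR : 0 < R)
    (L L' L'' : ℝ → ℝ) (c' c'' : ℝ) (hc'' : 0 < c'')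
    (hL0 : ∀ x ∈ Icc (-R) R, 0 ≤ L x)
    (hconv : ConvexOn ℝ (Icc (-R) R) L)
    (hderiv : ∀ x ∈ Icc (-R) R, HasDerivAt L (L' x) x)
    (hderiv2 : ∀ x ∈ Icc (-R) R, HasDerivAt L' (L'' x) x)
    (hgrad : ∀ x ∈ Icc (-R) R, (L' x) ^ 2 ≤ c')
    (hsc : ∀ x ∈ Icc (-R) R, c'' ≤ L'' x)
    (Δ Δhat : ℝ) (hΔ : Δ ∈ Icc (-R) R) (hΔhat : Δhat ∈ Icc (-R) R)
    (hden : L' Δ + L' (-Δ) ≠ 0)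
    (p : ℝ) (hp : p = L' (-Δ) / (L' Δ + L' (-Δ)))
    (hp01 : 0 ≤ p ∧ p ≤ 1)
    -- X s = L(s·Δhat) - L(s·Δ), its mean and variance under P(S=1)=p, P(S=-1)=1-p
    (X : ℝ → ℝ) (hX : ∀ s : ℝ, X s = L (s * Δhat) - L (s * Δ))
    (EX VarX : ℝ)
    (hEX : EX = p * X 1 + (1 - p) * X (-1))
    (hVarX : VarX = p * (X 1) ^ 2 + (1 - p) * (X (-1)) ^ 2 - EX ^ 2) :
    VarX ≤ (2 * c' / c'') * EX :=
  variance_le_expectation_general R L L' L'' c' c'' hc'' hderiv hderiv2 hgrad hsc Δ Δhat hΔ hΔhat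
    hden p hp hp01 X hX EX VarX hEX hVarX
end

section
/- Let p_1 > p_2 > ... > p_S be real numbers in [0,1] and let p_k ∈ [0,1] with p_S > p_k. Define F(q_1,...,q_S) = −Σ_{i=1}^S (S+1−i)·q_i − Σ_{i<j} q_i·q_j for a sequence sorted in decreasing order. Then for any element p_ℓ of the sequence, the original sequence (p_1,...,p_S) has strictly smaller expected partial ranking loss F than the sequence obtained by replacing p_ℓ by p_k (and re-sorting), with loss difference F(p_1,...,p_S) − F(sequence with p_ℓ replaced by p_k) bounded above by (p_k − p_ℓ)(1 + Σ_{i=1,i≠ℓ}^S p_i) < 0. -/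
open Finset

lemma pairs_eq_aux (m : ℕ) (r : ℕ → ℝ) :
    2 * ∑ i ∈ range m, ∑ j ∈ (range m).filter (fun j => i < j), r i * r j
      = (∑ i ∈ range m, r i)^2 - ∑ i ∈ range m, (r i)^2 := by
  have hfull : (∑ i ∈ range m, r i)^2 = ∑ i ∈ range m, ∑ j ∈ range m, r i * r j := by
    rw [sq, Finset.sum_mul_sum]
  have hsplit : ∀ i ∈ range m, ∑ j ∈ range m, r i * r j
      = (∑ j ∈ (range m).filter (fun j => j < i), r i * r j) + r i * r i
        + ∑ j ∈ (range m).filter (fun j => i < j), r i * r j := by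
    intro i hi
    have h2 : (range m).filter (fun j => ¬ j < i) = insert i ((range m).filter (fun j => i < j)) := by
      ext x
      simp only [Finset.mem_filter, Finset.mem_insert, Finset.mem_range] at *
      omega
    rw [← Finset.sum_filter_add_sum_filter_not (range m) (fun j => j < i), h2,
      Finset.sum_insert (by simp)]
    ring
  have hswap : ∑ i ∈ range m, ∑ j ∈ (range m).filter (fun j => j < i), r i * r j
      = ∑ i ∈ range m, ∑ j ∈ (range m).filter (fun j => i < j), r i * r j := by
    rw [Finset.sum_comm' (t' := range m) (s' := fun j => (range m).filter (fun i => j < i))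
      (by intro x y; simp only [Finset.mem_filter, Finset.mem_range]; omega)]
    exact Finset.sum_congr rfl fun y _ => Finset.sum_congr rfl fun x _ => mul_comm _ _
  rw [hfull, Finset.sum_congr rfl hsplit, Finset.sum_add_distrib, Finset.sum_add_distrib, hswap]
  simp only [sq]
  ring

/-- replacing an element of a decreasing sequence by a strictly smaller value
strictly increases the expected partial ranking loss. -/
theorem replacement_increases_loss (S : ℕ) (hS : 1 ≤ S)
    (p : ℕ → ℝ) (hp01 : ∀ i, i < S → p i ∈ Set.Icc (0 : ℝ) 1)
    (hdec : ∀ i j, i < j → j < S → p j < p i)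
    (pk : ℝ) (hpk01 : pk ∈ Set.Icc (0 : ℝ) 1)
    (hpk : ∀ i, i < S → pk < p i)
    (ℓ : ℕ) (hℓ : ℓ < S)
    -- replaced-and-resorted sequence: drop `p ℓ`, shift left, append `pk` at the end
    (q : ℕ → ℝ)
    (hq : ∀ i, i < S → q i = if i < ℓ then p i else if i < S - 1 then p (i + 1) else pk)
    (E : (ℕ → ℝ) → ℝ)
    (hE : ∀ r : ℕ → ℝ,
      E r = -(∑ i ∈ range S, ((S : ℝ) - (i : ℝ)) * r i)
            - ∑ i ∈ range S, ∑ j ∈ (range S).filter (fun j => i < j), r i * r j) :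
    E p - E q ≤ (pk - p ℓ) * (1 + ∑ i ∈ (range S).erase ℓ, p i)
      ∧ (pk - p ℓ) * (1 + ∑ i ∈ (range S).erase ℓ, p i) < 0 := by
  obtain ⟨n, rfl⟩ : ∃ n, S = n + 1 := ⟨S - 1, by omega⟩
  have hln : ℓ ≤ n := by omega
  set T : ℝ := ∑ i ∈ (range (n+1)).erase ℓ, p i with hTdef
  have hT0 : 0 ≤ T := by
    apply Finset.sum_nonneg
    intro i hi
    exact (hp01 i (Finset.mem_range.mp (Finset.mem_of_mem_erase hi))).1
  have hkl : pk < p ℓ := hpk ℓ hℓ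
  have hneg : (pk - p ℓ) * (1 + T) < 0 :=
    mul_neg_of_neg_of_pos (by linarith) (by linarith)
  refine ⟨?_, hneg⟩
  -- splitting lemmas
  have hsplitS : ∀ g : ℕ → ℝ, ∑ i ∈ range (n+1), g i
      = ∑ i ∈ range ℓ, g i + ∑ i ∈ Ico ℓ n, g i + g n := by
    intro g
    rw [← Finset.sum_range_add_sum_Ico g (by omega : ℓ ≤ n+1),
      Finset.sum_Ico_succ_top (by omega : ℓ ≤ n)]
    ring
  have hsplitS' : ∀ g : ℕ → ℝ, ∑ i ∈ range (n+1), g i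
      = ∑ i ∈ range ℓ, g i + g ℓ + ∑ i ∈ Ico (ℓ+1) (n+1), g i := by
    intro g
    rw [← Finset.sum_range_add_sum_Ico g (by omega : ℓ ≤ n+1),
      Finset.sum_eq_sum_Ico_succ_bot (by omega : ℓ < n+1)]
    ring
  have hshift : ∀ g : ℕ → ℝ, ∑ i ∈ Ico ℓ n, g (i+1) = ∑ j ∈ Ico (ℓ+1) (n+1), g j := by
    intro g
    rw [Finset.sum_Ico_eq_sum_range, Finset.sum_Ico_eq_sum_range]
    have : n + 1 - (ℓ + 1) = n - ℓ := by omega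
    rw [this]
    exact Finset.sum_congr rfl fun i _ => by congr 1; omega
  have herase : ∀ g : ℕ → ℝ, ∑ i ∈ (range (n+1)).erase ℓ, g i
      = ∑ i ∈ range ℓ, g i + ∑ i ∈ Ico (ℓ+1) (n+1), g i := by
    intro g
    have h1 := hsplitS' g
    have h2 := Finset.sum_erase_add (range (n+1)) g (Finset.mem_range.mpr hℓ)
    linarith
  -- q sums
  have hqgen : ∀ c : ℕ → ℝ, ∀ f : ℝ → ℝ,
      ∑ i ∈ range (n+1), c i * f (q i)
        = ∑ i ∈ range ℓ, c i * f (p i) + ∑ i ∈ Ico ℓ n, c i * f (p (i+1)) + c n * f pk := by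
    intro c f
    rw [hsplitS (fun i => c i * f (q i))]
    congr 1
    · congr 1
      · refine Finset.sum_congr rfl fun i hi => ?_
        have hi' := Finset.mem_range.mp hi
        rw [hq i (by omega)]
        simp [show i < ℓ from hi']
      · refine Finset.sum_congr rfl fun i hi => ?_
        have hi' := Finset.mem_Ico.mp hi
        rw [hq i (by omega)]
        have h1 : ¬ i < ℓ := by omega
        have h2 : i < n + 1 - 1 := by omega
        rw [if_neg h1, if_pos h2]
    · rw [hq n (by omega)]
      have h1 : ¬ n < ℓ := by omega
      have h2 : ¬ n < n + 1 - 1 := by omega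
      rw [if_neg h1, if_neg h2]
  have hq1 : ∑ i ∈ range (n+1), q i = T + pk := by
    have := hqgen (fun _ => 1) id
    simp only [one_mul, id] at this
    rw [this, hshift (fun j => p j), hTdef, herase]
  have hq2 : ∑ i ∈ range (n+1), (q i)^2
      = (∑ i ∈ (range (n+1)).erase ℓ, (p i)^2) + pk^2 := by
    have := hqgen (fun _ => 1) (fun x => x^2)
    simp only [one_mul] at this
    rw [this, hshift (fun j => (p j)^2), herase]
  -- weighted sums
  set N : ℝ := ((n : ℝ) + 1) with hNdef
  have hcast : ((n+1 : ℕ) : ℝ) = N := by push_cast [hNdef]; ring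
  have hAq : ∑ i ∈ range (n+1), (((n+1 : ℕ) : ℝ) - (i:ℝ)) * q i
      = ∑ i ∈ range ℓ, (N - i) * p i
        + (∑ j ∈ Ico (ℓ+1) (n+1), (N - j) * p j + ∑ j ∈ Ico (ℓ+1) (n+1), p j) + pk := by
    have := hqgen (fun i => ((n+1 : ℕ) : ℝ) - (i:ℝ)) id
    simp only [id] at this
    rw [this]
    have hmid : ∑ i ∈ Ico ℓ n, (((n+1 : ℕ) : ℝ) - (i:ℝ)) * p (i+1)
        = ∑ j ∈ Ico (ℓ+1) (n+1), ((N - j) * p j + p j) := by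
      rw [← hshift (fun j => (N - (j:ℝ)) * p j + p j)]
      refine Finset.sum_congr rfl fun i _ => ?_
      rw [hcast]
      push_cast
      ring
    have hlast : (N - (n:ℝ)) * pk = pk := by rw [hNdef]; ring
    rw [hmid, Finset.sum_add_distrib, hcast, hlast]
  have hAp : ∑ i ∈ range (n+1), (((n+1 : ℕ) : ℝ) - (i:ℝ)) * p i
      = ∑ i ∈ range ℓ, (N - i) * p i + (N - ℓ) * p ℓ
        + ∑ j ∈ Ico (ℓ+1) (n+1), (N - j) * p j := by
    rw [hsplitS' (fun i => (((n+1 : ℕ) : ℝ) - (i:ℝ)) * p i)]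
    rw [hcast]
  -- sums of p
  have hp1 : ∑ i ∈ range (n+1), p i = T + p ℓ := by
    rw [hTdef, ← Finset.sum_erase_add (range (n+1)) p (Finset.mem_range.mpr hℓ)]
  have hp2 : ∑ i ∈ range (n+1), (p i)^2
      = (∑ i ∈ (range (n+1)).erase ℓ, (p i)^2) + p ℓ^2 := by
    rw [← Finset.sum_erase_add (range (n+1)) (fun i => (p i)^2) (Finset.mem_range.mpr hℓ)]
  -- pair sums
  have hBp := pairs_eq_aux (n+1) p
  have hBq := pairs_eq_aux (n+1) q
  rw [hp1, hp2] at hBp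
  rw [hq1, hq2] at hBq
  -- bound on D
  set D : ℝ := ∑ j ∈ Ico (ℓ+1) (n+1), p j with hDdef
  have hD : D ≤ ((n : ℝ) - (ℓ : ℝ)) * p ℓ := by
    have hcard : (Ico (ℓ+1) (n+1)).card = n - ℓ := by
      rw [Nat.card_Ico]; omega
    have := Finset.sum_le_card_nsmul (Ico (ℓ+1) (n+1)) p (p ℓ)
      (fun j hj => le_of_lt (hdec ℓ j (Finset.mem_Ico.mp hj).1 (Finset.mem_Ico.mp hj).2))
    rw [hcard, nsmul_eq_mul, Nat.cast_sub hln] at this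
    exact this
  -- final computation
  rw [hE p, hE q]
  have hB : (∑ i ∈ range (n+1), ∑ j ∈ (range (n+1)).filter (fun j => i < j), q i * q j)
      - (∑ i ∈ range (n+1), ∑ j ∈ (range (n+1)).filter (fun j => i < j), p i * p j)
      = (pk - p ℓ) * T := by linear_combination (hBq - hBp) / 2
  have hA : (∑ i ∈ range (n+1), (((n+1 : ℕ) : ℝ) - (i:ℝ)) * p i)
      - (∑ i ∈ range (n+1), (((n+1 : ℕ) : ℝ) - (i:ℝ)) * q i)
      = (N - ℓ) * p ℓ - D - pk := by
    rw [hAp, hAq, hDdef]; ring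
  have hexp : (pk - p ℓ) * (1 + T) = (pk - p ℓ) + (pk - p ℓ) * T := by ring
  have hNe : (N - (ℓ:ℝ)) * p ℓ = ((n:ℝ) - (ℓ:ℝ)) * p ℓ + p ℓ := by rw [hNdef]; ring
  linarith [hA, hB, hD, hexp, hNe]
end

section
/- Among all subsets Y ⊆ [K] of size at most S, the function Y ↦ Σ_{i,j∈Y, i<j}(min{p_i,p_j} − p_i·p_j) − S·Σ_{i∈Y} p_i is minimized by the set consisting of the S indices with the largest values p_i (assuming all p_i are distinct). -/
/-!
Write `F i j = min (p i) (p j) - p i * p j`, so that `F i k ≤ p k` and `F z i - F z j ≤ p i - p j`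
whenever `p j ≤ p i` (for `p ≥ 0`). Adding an index `k` to `Y` changes `G` by
`∑_{i ∈ Y} F i k - S p_k ≤ (|Y| - S) p_k`, and replacing `j` by `i` with `p j ≤ p i` changes it by
at most `(|Y| - 1 - S) (p_i - p_j)`. Hence, while `|Y| ≤ S`, filling `Y` up with top indices and
then trading its other elements for top ones never increases `G`, and this ends at the top set.
-/

open Finset

section PairSum

variable {α β : Type*} [LinearOrder α] [AddCommMonoid β]

def pairSum (F : α → α → β) (Y : Finset α) : β :=
  ∑ i ∈ Y, ∑ j ∈ Y with i < j, F i j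

theorem pairSum_insert {F : α → α → β} (hF : ∀ i j, F i j = F j i) {Y : Finset α} {k : α}
    (hk : k ∉ Y) : pairSum F (insert k Y) = pairSum F Y + ∑ i ∈ Y, F i k := by
  simp only [pairSum, sum_filter, sum_insert hk, lt_irrefl, if_false, zero_add,
    sum_add_distrib]
  rw [← add_assoc, add_comm, ← sum_add_distrib]
  congr 1
  refine sum_congr rfl fun i hi => ?_
  rcases lt_trichotomy i k with h | rfl | h
  · simp [h.not_gt, h]
  · exact absurd hi hk
  · simp [h, h.not_gt, hF i k]

end PairSum

theorem min_sub_mul_le_right {a b : ℝ} (ha : 0 ≤ a) (hb : 0 ≤ b) : min a b - a * b ≤ b := by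
  linarith [min_le_right a b, mul_nonneg ha hb]

theorem min_sub_mul_sub_min_sub_mul_le {a b c : ℝ} (hc : 0 ≤ c) (hab : b ≤ a) :
    (min c a - c * a) - (min c b - c * b) ≤ a - b := by
  have : min c a - min c b ≤ a - b := by
    rcases le_total c b with h | h
    · rw [min_eq_left h, min_eq_left (h.trans hab)]; linarith
    · rw [min_eq_right h]; linarith [min_le_right c a]
  nlinarith [mul_nonneg hc (sub_nonneg.2 hab)]

theorem Finset.apply_le_of_insert_le_of_exchange_le {α β : Type*} [DecidableEq α] [Preorder β]
    {G : Finset α → β} {T : Finset α}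
    (hins : ∀ Y : Finset α, #Y < #T → ∀ i ∈ T \ Y, G (insert i Y) ≤ G Y)
    (hexch : ∀ Y : Finset α, #Y = #T → ∀ i ∈ T \ Y, ∀ j ∈ Y \ T,
      G (insert i (Y.erase j)) ≤ G Y)
    (Y : Finset α) (hY : #Y ≤ #T) : G T ≤ G Y := by
  by_cases hTY : T ⊆ Y
  · rw [eq_of_subset_of_card_le hTY hY]
  obtain ⟨i, hiT, hiY⟩ := not_subset.1 hTY
  have hi : i ∈ T \ Y := mem_sdiff.2 ⟨hiT, hiY⟩
  rcases hY.lt_or_eq with hlt | heq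
  · have hcard : #(T \ insert i Y) < #(T \ Y) := by
      rw [sdiff_insert]; exact card_erase_lt_of_mem hi
    exact (apply_le_of_insert_le_of_exchange_le hins hexch (insert i Y)
      ((card_insert_of_notMem hiY).trans_le hlt)).trans (hins Y hlt i hi)
  · obtain ⟨j, hj⟩ : (Y \ T).Nonempty := by
      rw [sdiff_nonempty]
      exact fun hYT => hTY (eq_of_subset_of_card_le hYT heq.ge).symm.subset
    have hcard : #(T \ insert i (Y.erase j)) < #(T \ Y) := by
      have : T \ Y.erase j = T \ Y := by grind
      rw [sdiff_insert, this]; exact card_erase_lt_of_mem hi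
    have hcard' : #(insert i (Y.erase j)) = #Y := by
      rw [card_insert_of_notMem (fun h => hiY (mem_of_mem_erase h)),
        card_erase_add_one (mem_sdiff.1 hj).1]
    exact (apply_le_of_insert_le_of_exchange_le hins hexch (insert i (Y.erase j))
      (hcard'.trans heq).le).trans (hexch Y heq i hi j hj)
termination_by #(T \ Y)

section RankingRisk

variable {α : Type*} [LinearOrder α] {p : α → ℝ} {S : ℝ}

variable (p S) in
def rankingRisk (Y : Finset α) : ℝ :=
  pairSum (fun i j => min (p i) (p j) - p i * p j) Y - S * ∑ i ∈ Y, p i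

theorem rankingRisk_insert {Y : Finset α} {k : α} (hk : k ∉ Y) :
    rankingRisk p S (insert k Y)
      = rankingRisk p S Y + ∑ i ∈ Y, (min (p i) (p k) - p i * p k) - S * p k := by
  rw [rankingRisk, rankingRisk, pairSum_insert (fun i j => by rw [min_comm, mul_comm]) hk,
    sum_insert hk]
  ring

theorem rankingRisk_insert_le (hp : ∀ i, 0 ≤ p i) {Y : Finset α} (hY : (#Y : ℝ) ≤ S) {k : α}
    (hk : k ∉ Y) : rankingRisk p S (insert k Y) ≤ rankingRisk p S Y := by
  have hsum : ∑ i ∈ Y, (min (p i) (p k) - p i * p k) ≤ #Y * p k :=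
    (sum_le_sum fun i _ => min_sub_mul_le_right (hp i) (hp k)).trans_eq
      (by rw [sum_const, nsmul_eq_mul])
  rw [rankingRisk_insert hk]
  nlinarith [hp k]

theorem rankingRisk_insert_le_insert (hp : ∀ i, 0 ≤ p i) {Z : Finset α} (hZ : (#Z : ℝ) ≤ S)
    {i j : α} (hi : i ∉ Z) (hj : j ∉ Z) (hij : p j ≤ p i) :
    rankingRisk p S (insert i Z) ≤ rankingRisk p S (insert j Z) := by
  have hsum : ∑ z ∈ Z, (min (p z) (p i) - p z * p i) - ∑ z ∈ Z, (min (p z) (p j) - p z * p j)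
      ≤ #Z * (p i - p j) := by
    rw [← sum_sub_distrib]
    exact (sum_le_sum fun z _ => min_sub_mul_sub_min_sub_mul_le (hp z) hij).trans_eq
      (by rw [sum_const, nsmul_eq_mul])
  rw [rankingRisk_insert hi, rankingRisk_insert hj]
  nlinarith [sub_nonneg.2 hij]

end RankingRisk

theorem top_S_minimizes_general (K S : ℕ)
    (p : Fin K → ℝ) (hp01 : ∀ i, p i ∈ Set.Icc (0 : ℝ) 1)
    (G : Finset (Fin K) → ℝ)
    (hG : ∀ Y : Finset (Fin K),
      G Y = (∑ i ∈ Y, ∑ j ∈ Y.filter (fun j => i < j), (min (p i) (p j) - p i * p j))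
            - (S : ℝ) * ∑ i ∈ Y, p i)
    (Ytop : Finset (Fin K)) (hcardtop : Ytop.card = S)
    (htop : ∀ i ∈ Ytop, ∀ j : Fin K, j ∉ Ytop → p j < p i) :
    ∀ Y : Finset (Fin K), Y.card ≤ S → G Ytop ≤ G Y := by
  have hp : ∀ i, 0 ≤ p i := fun i => (hp01 i).1
  obtain rfl : G = rankingRisk p S := funext hG
  subst hcardtop
  refine apply_le_of_insert_le_of_exchange_le (fun Y hY i hi => ?_) (fun Y hY i hi j hj => ?_)
  · exact rankingRisk_insert_le hp (by exact_mod_cast hY.le) (mem_sdiff.1 hi).2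
  · obtain ⟨hjY, hjT⟩ := mem_sdiff.1 hj
    conv_rhs => rw [← insert_erase hjY]
    exact rankingRisk_insert_le_insert hp (by exact_mod_cast card_erase_le.trans hY.le)
      (fun h => (mem_sdiff.1 hi).2 (mem_of_mem_erase h)) (notMem_erase j Y)
      (htop i (mem_sdiff.1 hi).1 j hjT).le

/-- among subsets of size at most `S`, the partial ranking risk functional `G`
is minimized by the set of the `S` indices with largest `p`. -/
theorem top_S_minimizes (K S : ℕ) (hS : 1 ≤ S) (hSK : S ≤ K)
    (p : Fin K → ℝ) (hp01 : ∀ i, p i ∈ Set.Icc (0 : ℝ) 1)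
    (hdistinct : Function.Injective p)
    (G : Finset (Fin K) → ℝ)
    (hG : ∀ Y : Finset (Fin K),
      G Y = (∑ i ∈ Y, ∑ j ∈ Y.filter (fun j => i < j), (min (p i) (p j) - p i * p j))
            - (S : ℝ) * ∑ i ∈ Y, p i)
    (Ytop : Finset (Fin K)) (hcardtop : Ytop.card = S)
    (htop : ∀ i ∈ Ytop, ∀ j : Fin K, j ∉ Ytop → p j < p i) :
    ∀ Y : Finset (Fin K), Y.card ≤ S → G Ytop ≤ G Y :=
  top_S_minimizes_general K S p hp01 G hG Ytop hcardtop htop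
end

section
/- Let A₀ = I (the d×d identity) and A_k = A_{k−1} + s_k·x_k x_k^⊤ for k = 1,...,t, where s_k ∈ {0,1} and ‖x_k‖ = 1. Then Σ_{k=1}^t s_k·x_k^⊤ A_k^{−1} x_k ≤ ln(det(A_t)/det(A₀)) ≤ d·ln(1 + t/d). -/
/-!
By the matrix determinant lemma, `det A_k = det A_{k-1} * (1 + p_k)` with
`p_k = s_k x_kᵀ A_{k-1}⁻¹ x_k ≥ 0`, and by Sherman–Morrison `s_k x_kᵀ A_k⁻¹ x_k = p_k / (1 + p_k)`,
which is at most `log (1 + p_k)`; summing over `k` telescopes to the log-determinant.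
For the upper bound, AM-GM on the eigenvalues gives `det A_t ≤ (tr A_t / d) ^ d`, and each
update adds at most `1` to the trace, so `tr A_t ≤ d + t`.
-/

open Matrix Finset

namespace Real

theorem prod_le_arith_mean_pow {ι : Type*} (s : Finset ι) (z : ι → ℝ) (hz : ∀ i ∈ s, 0 ≤ z i) :
    ∏ i ∈ s, z i ≤ ((∑ i ∈ s, z i) / #s) ^ #s := by
  rcases s.eq_empty_or_nonempty with rfl | hs
  · simp
  have hcard : (#s : ℝ) ≠ 0 := by exact_mod_cast hs.card_pos.ne'
  have amgm := geom_mean_le_arith_mean_weighted s (fun _ ↦ (#s : ℝ)⁻¹) z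
    (fun _ _ ↦ by positivity) (by simp [hcard]) hz
  rw [← mul_sum, inv_mul_eq_div, finsetProd_rpow s z hz] at amgm
  calc ∏ i ∈ s, z i = ((∏ i ∈ s, z i) ^ (#s : ℝ)⁻¹) ^ #s :=
        (rpow_inv_natCast_pow (prod_nonneg hz) hs.card_pos.ne').symm
    _ ≤ _ := pow_le_pow_left₀ (rpow_nonneg (prod_nonneg hz) _) amgm _

end Real

theorem Fin.sum_univ_sub_telescope {M : Type*} [AddCommGroup M] (f : ℕ → M) (t : ℕ) :
    ∑ k : Fin t, (f (k + 1) - f k) = f t - f 0 := by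
  rw [Fin.sum_univ_eq_sum_range (fun k ↦ f (k + 1) - f k), sum_range_sub]

namespace Matrix

variable {n : Type*} [Fintype n]

theorem PosDef.add_smul_vecMulVec_self {B : Matrix n n ℝ} (hB : B.PosDef) {c : ℝ} (hc : 0 ≤ c)
    (v : n → ℝ) : (B + c • vecMulVec v v).PosDef :=
  hB.add_posSemidef <| by simpa using (posSemidef_vecMulVec_self_star v).smul hc

section

variable [DecidableEq n]

theorem PosSemidef.det_le_trace_div_card_pow {A : Matrix n n ℝ} (hA : A.PosSemidef) :
    A.det ≤ (A.trace / Fintype.card n) ^ Fintype.card n := by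
  rw [hA.isHermitian.det_eq_prod_eigenvalues, hA.isHermitian.trace_eq_sum_eigenvalues]
  simpa using Real.prod_le_arith_mean_pow univ _ fun i _ ↦ hA.eigenvalues_nonneg i

theorem det_add_vecMulVec {R : Type*} [CommRing R] {B : Matrix n n R} (hB : IsUnit B.det)
    (u v : n → R) : (B + vecMulVec u v).det = B.det * (1 + v ⬝ᵥ B⁻¹ *ᵥ u) := by
  rw [vecMulVec_eq Unit, det_add_replicateCol_mul_replicateRow hB, Matrix.mul_assoc,
    ← replicateCol_mulVec, det_unique (n := Unit)]
  simp

theorem inv_add_vecMulVec_mulVec {K : Type*} [Field K] {B : Matrix n n K} (hB : IsUnit B.det)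
    (u v : n → K) (h : 1 + v ⬝ᵥ B⁻¹ *ᵥ u ≠ 0) :
    (B + vecMulVec u v)⁻¹ *ᵥ u = (1 + v ⬝ᵥ B⁻¹ *ᵥ u)⁻¹ • B⁻¹ *ᵥ u := by
  have hBuv : IsUnit (B + vecMulVec u v).det := by
    rw [det_add_vecMulVec hB]; exact hB.mul h.isUnit
  have hBu : (B + vecMulVec u v) *ᵥ B⁻¹ *ᵥ u = (1 + v ⬝ᵥ B⁻¹ *ᵥ u) • u := by
    rw [add_mulVec, mulVec_mulVec, mul_nonsing_inv _ hB, one_mulVec, vecMulVec_mulVec,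
      op_smul_eq_smul, add_smul, one_smul]
  calc (B + vecMulVec u v)⁻¹ *ᵥ u
      = (1 + v ⬝ᵥ B⁻¹ *ᵥ u)⁻¹ • (B + vecMulVec u v)⁻¹ *ᵥ (B + vecMulVec u v) *ᵥ B⁻¹ *ᵥ u := by
        rw [hBu, mulVec_smul, inv_smul_smul₀ h]
    _ = _ := by rw [mulVec_mulVec, nonsing_inv_mul _ hBuv, one_mulVec]

theorem PosDef.mul_dotProduct_inv_mulVec_le_log_det_sub {B : Matrix n n ℝ} (hB : B.PosDef) {c : ℝ}
    (hc : 0 ≤ c) (v : n → ℝ) :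
    c * (v ⬝ᵥ (B + c • vecMulVec v v)⁻¹ *ᵥ v) ≤
      Real.log (B + c • vecMulVec v v).det - Real.log B.det := by
  set p := c * (v ⬝ᵥ B⁻¹ *ᵥ v)
  have hp : 0 ≤ p := mul_nonneg hc (by simpa using hB.inv.posSemidef.dotProduct_mulVec_nonneg v)
  have hB' : IsUnit B.det := hB.det_pos.ne'.isUnit
  have hsmul : c • vecMulVec v v = vecMulVec (c • v) v := by ext; simp [vecMulVec_apply, mul_assoc]
  have hsp : v ⬝ᵥ B⁻¹ *ᵥ (c • v) = p := by rw [mulVec_smul, dotProduct_smul, smul_eq_mul]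
  have hdet : (B + c • vecMulVec v v).det = B.det * (1 + p) := by
    rw [hsmul, det_add_vecMulVec hB', hsp]
  have hquad : c * (v ⬝ᵥ (B + c • vecMulVec v v)⁻¹ *ᵥ v) = p / (1 + p) := by
    rw [← smul_eq_mul, ← dotProduct_smul, ← mulVec_smul, hsmul,
      inv_add_vecMulVec_mulVec hB' _ _ (by rw [hsp]; positivity), dotProduct_smul, hsp,
      smul_eq_mul, inv_mul_eq_div]
  rw [hquad, hdet, Real.log_mul hB.det_pos.ne' (by positivity), add_sub_cancel_left]
  calc p / (1 + p) = 1 - (1 + p)⁻¹ := by field_simp; ring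
    _ ≤ Real.log (1 + p) := Real.one_sub_inv_le_log_of_pos (by positivity)

end

section RankOneUpdates

variable {t : ℕ} {x : Fin t → n → ℝ} {s : Fin t → ℝ}
  {A : ℕ → Matrix n n ℝ}

theorem trace_of_rankOne_updates
    (hAk : ∀ k : Fin t, A (k + 1) = A k + s k • vecMulVec (x k) (x k)) :
    (A t).trace = (A 0).trace + ∑ k, s k * (x k ⬝ᵥ x k) := by
  rw [← sub_eq_iff_eq_add', ← Fin.sum_univ_sub_telescope (fun k ↦ (A k).trace)]
  refine sum_congr rfl fun k _ ↦ ?_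
  rw [hAk k, trace_add, trace_smul, trace_vecMulVec, smul_eq_mul, add_sub_cancel_left]

theorem posDef_of_rankOne_updates (hA0 : (A 0).PosDef) (hs : ∀ k, 0 ≤ s k)
    (hAk : ∀ k : Fin t, A (k + 1) = A k + s k • vecMulVec (x k) (x k)) {k : ℕ} (hk : k ≤ t) :
    (A k).PosDef := by
  induction k with
  | zero => exact hA0
  | succ k ih =>
    rw [hAk ⟨k, hk⟩]
    exact (ih (by omega)).add_smul_vecMulVec_self (hs _) _

theorem sum_mul_dotProduct_inv_mulVec_le_log_det_sub [DecidableEq n] (hA0 : (A 0).PosDef)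
    (hs : ∀ k, 0 ≤ s k) (hAk : ∀ k : Fin t, A (k + 1) = A k + s k • vecMulVec (x k) (x k)) :
    ∑ k, s k * (x k ⬝ᵥ (A (k + 1))⁻¹ *ᵥ x k) ≤ Real.log (A t).det - Real.log (A 0).det := by
  rw [← Fin.sum_univ_sub_telescope (fun k ↦ Real.log (A k).det)]
  refine sum_le_sum fun k _ ↦ ?_
  rw [hAk k]
  exact (posDef_of_rankOne_updates hA0 hs hAk k.is_lt.le).mul_dotProduct_inv_mulVec_le_log_det_sub
    (hs k) (x k)

end RankOneUpdates

end Matrix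

theorem logdet_bound_general (d t : ℕ)
    (x : Fin t → Fin d → ℝ) (hx : ∀ k, x k ⬝ᵥ x k = 1)
    (s : Fin t → ℝ) (hs : ∀ k, s k = 0 ∨ s k = 1)
    (A : ℕ → Matrix (Fin d) (Fin d) ℝ)
    (hA0 : A 0 = 1)
    (hAk : ∀ k : Fin t, A (k + 1) = A k + s k • vecMulVec (x k) (x k)) :
    (∑ k : Fin t, s k * (x k ⬝ᵥ (A (k + 1))⁻¹.mulVec (x k)))
        ≤ Real.log ((A t).det / (A 0).det)
      ∧ Real.log ((A t).det / (A 0).det) ≤ d * Real.log (1 + t / d) := by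
  have hs₀ : ∀ k, 0 ≤ s k := fun k ↦ by rcases hs k with h | h <;> simp [h]
  have hPD₀ : (A 0).PosDef := hA0 ▸ PosDef.one
  have hdet₀ : (A 0).det = 1 := by rw [hA0, det_one]
  rw [hdet₀, div_one]
  refine ⟨by simpa [hdet₀] using sum_mul_dotProduct_inv_mulVec_le_log_det_sub hPD₀ hs₀ hAk, ?_⟩
  have htrace : (A t).trace ≤ d + t := by
    rw [trace_of_rankOne_updates hAk, hA0, trace_one, Fintype.card_fin]
    gcongr
    calc ∑ k, s k * (x k ⬝ᵥ x k) ≤ ∑ _k : Fin t, (1 : ℝ) :=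
          sum_le_sum fun k _ ↦ by rcases hs k with h | h <;> simp [h, hx]
      _ = t := by simp
  have hPDt := posDef_of_rankOne_updates hPD₀ hs₀ hAk le_rfl
  have hmean : (A t).trace / d ≤ 1 + t / d :=
    calc (A t).trace / d ≤ (d + t) / d := by gcongr
      _ ≤ 1 + t / d := by rw [add_div]; gcongr; exact div_self_le_one _
  calc Real.log (A t).det ≤ Real.log ((1 + t / d) ^ d) := by
        refine Real.log_le_log hPDt.det_pos (hPDt.posSemidef.det_le_trace_div_card_pow.trans ?_)
        rw [Fintype.card_fin]
        exact pow_le_pow_left₀ (div_nonneg hPDt.posSemidef.trace_nonneg d.cast_nonneg) hmean _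
    _ = d * Real.log (1 + t / d) := Real.log_pow _ _

/-- telescoping log-determinant bound for rank-one updates. -/
theorem logdet_bound (d t : ℕ) (hd : 1 ≤ d) (ht : 1 ≤ t)
    (x : Fin t → Fin d → ℝ) (hx : ∀ k, x k ⬝ᵥ x k = 1)
    (s : Fin t → ℝ) (hs : ∀ k, s k = 0 ∨ s k = 1)
    (A : ℕ → Matrix (Fin d) (Fin d) ℝ)
    (hA0 : A 0 = 1)
    (hAk : ∀ k : Fin t, A (k + 1) = A k + s k • vecMulVec (x k) (x k)) :
    (∑ k : Fin t, s k * (x k ⬝ᵥ (A (k + 1))⁻¹.mulVec (x k)))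
        ≤ Real.log ((A t).det / (A 0).det)
      ∧ Real.log ((A t).det / (A 0).det) ≤ d * Real.log (1 + t / d) :=
  logdet_bound_general d t x hx s hs A hA0 hAk
end

section
/- One-step ranking regret: let p : [−R,R] → [0,1] be nondecreasing and c_L-Lipschitz, and suppose Δ_i ∈ [−R,R], Δ̂_i ∈ ℝ, ε_i ≥ 0 with |Δ_i − Δ̂_i| ≤ ε_i for i ∈ [K]. Let p_i = p(Δ_i), p̂⁺_i = p([Δ̂_i+ε_i]_D), p̂⁻_i = p([Δ̂_i−ε_i]_D). For any set Ŷ of size S_t, Σ_{i∈Ŷ}(S_t+1−ĵ_i)(p̂⁺_i − p̂⁻_i) + Σ_{i<j∈Ŷ}(p̂⁺_i p̂⁺_j − p̂⁻_i p̂⁻_j) ≤ 2S_t·c_L·Σ_{i∈Ŷ} ε_i + 2(S_t−1)·c_L·Σ_{i∈Ŷ} ε_i < 4S_t·c_L·Σ_{i∈Ŷ} ε_i (assuming S_t ≥ 1 and Σ_{i∈Ŷ} ε_i > 0). -/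
open Set Finset

/-!
Clipping to `[-R, R]` is a contraction, so by the Lipschitz bound each confidence gap
`p̂⁺ᵢ - p̂⁻ᵢ` is at most `2 c_L εᵢ`. Since all probabilities lie in `[0, 1]`, the gap of a product
`p̂⁺ᵢ p̂⁺ⱼ - p̂⁻ᵢ p̂⁻ⱼ` is at most the sum of the two gaps, and every `i ∈ Ŷ` belongs to exactly
`S_t - 1` pairs. The position weights `S_t + 1 - ĵᵢ` are at most `S_t`.
-/

theorem abs_comp_projIcc_sub_le {a b c : ℝ} (h : a ≤ b) {f : ℝ → ℝ} (hc : 0 ≤ c)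
    (hf : ∀ x ∈ Icc a b, ∀ y ∈ Icc a b, |f x - f y| ≤ c * |x - y|) (x y : ℝ) :
    |f (projIcc a b h x) - f (projIcc a b h y)| ≤ c * |x - y| :=
  (hf _ (projIcc a b h x).2 _ (projIcc a b h y).2).trans <|
    mul_le_mul_of_nonneg_left (abs_projIcc_sub_projIcc h) hc

theorem abs_mul_sub_mul_le {a b c d : ℝ} (ha : |a| ≤ 1) (hd : |d| ≤ 1) :
    |a * b - c * d| ≤ |a - c| + |b - d| := by
  calc |a * b - c * d| = |a * (b - d) + (a - c) * d| := by ring_nf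
    _ ≤ |a| * |b - d| + |a - c| * |d| := by
        rw [← abs_mul, ← abs_mul]; exact abs_add_le _ _
    _ ≤ |a - c| + |b - d| := by
        nlinarith [abs_nonneg (b - d), abs_nonneg (a - c)]

theorem card_filter_lt_add_card_filter_gt {ι : Type*} [LinearOrder ι] {s : Finset ι} {i : ι}
    (hi : i ∈ s) : #{j ∈ s | i < j} + #{j ∈ s | j < i} = #s - 1 := by
  rw [← card_erase_of_mem hi, ← card_filter_add_card_filter_not (s := s.erase i) (i < ·)]
  congr 2 <;> ext j <;> simp only [mem_filter, mem_erase] <;> grind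

theorem sum_sum_filter_lt_add {ι M : Type*} [LinearOrder ι] [AddCommMonoid M]
    (s : Finset ι) (f : ι → M) :
    ∑ i ∈ s, ∑ j ∈ s with i < j, (f i + f j) = (#s - 1) • ∑ i ∈ s, f i := by
  have hswap : ∑ i ∈ s, ∑ j ∈ s with i < j, f j = ∑ j ∈ s, ∑ i ∈ s with i < j, f j :=
    sum_comm' (by simp only [mem_filter]; tauto)
  calc ∑ i ∈ s, ∑ j ∈ s with i < j, (f i + f j)
      = ∑ i ∈ s, #{j ∈ s | i < j} • f i + ∑ j ∈ s, #{i ∈ s | i < j} • f j := by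
        simp only [sum_add_distrib, hswap, sum_const]
    _ = ∑ i ∈ s, (#s - 1) • f i := by
        rw [← sum_add_distrib]
        exact sum_congr rfl fun i hi => by rw [← add_smul, card_filter_lt_add_card_filter_gt hi]
    _ = (#s - 1) • ∑ i ∈ s, f i := (smul_sum ..).symm

theorem sum_sum_filter_lt_le {ι M : Type*} [LinearOrder ι] [AddCommMonoid M] [PartialOrder M]
    [IsOrderedAddMonoid M] (s : Finset ι) {g : ι → ι → M} {e : ι → M}
    (hg : ∀ i ∈ s, ∀ j ∈ s, g i j ≤ e i + e j) :
    ∑ i ∈ s, ∑ j ∈ s with i < j, g i j ≤ (#s - 1) • ∑ i ∈ s, e i :=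
  (sum_le_sum fun i hi => sum_le_sum fun j hj => hg i hi j (mem_filter.1 hj).1).trans_eq
    (sum_sum_filter_lt_add s e)

theorem sum_mul_le_of_abs_le {ι : Type*} {s : Finset ι} {w d e : ι → ℝ} {W : ℝ}
    (hw : ∀ i ∈ s, 0 ≤ w i ∧ w i ≤ W) (hd : ∀ i ∈ s, |d i| ≤ e i) :
    ∑ i ∈ s, w i * d i ≤ W * ∑ i ∈ s, e i := by
  rw [mul_sum]
  refine sum_le_sum fun i hi => ?_
  calc w i * d i ≤ w i * e i :=
        mul_le_mul_of_nonneg_left ((le_abs_self _).trans (hd i hi)) (hw i hi).1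
    _ ≤ W * e i := mul_le_mul_of_nonneg_right (hw i hi).2 ((abs_nonneg _).trans (hd i hi))

theorem one_step_ranking_regret_general (K : ℕ)
    (R : ℝ) (hR : 0 < R)
    (cL : ℝ) (hcL : 0 < cL) (p : ℝ → ℝ)
    (hlip : ∀ x ∈ Icc (-R) R, ∀ y ∈ Icc (-R) R, |p x - p y| ≤ cL * |x - y|)
    (hp01 : ∀ x ∈ Icc (-R) R, p x ∈ Icc (0 : ℝ) 1)
    (clip : ℝ → ℝ) (hclip : ∀ x, clip x = max (-R) (min R x))
    (Δhat ε : Fin K → ℝ)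
    (hε : ∀ i, 0 ≤ ε i)
    (pplus pminus : Fin K → ℝ)
    (hpplus : ∀ i, pplus i = p (clip (Δhat i + ε i)))
    (hpminus : ∀ i, pminus i = p (clip (Δhat i - ε i)))
    (Yhat : Finset (Fin K)) (St : ℕ) (hSt : Yhat.card = St) (hSt1 : 1 ≤ St)
    (rk : Fin K → ℕ) (hrk : ∀ i ∈ Yhat, 1 ≤ rk i ∧ rk i ≤ St)
    (hsum : 0 < ∑ i ∈ Yhat, ε i) :
    (∑ i ∈ Yhat, ((St : ℝ) + 1 - (rk i : ℝ)) * (pplus i - pminus i))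
        + (∑ i ∈ Yhat, ∑ j ∈ Yhat.filter (fun j => i < j),
            (pplus i * pplus j - pminus i * pminus j))
      ≤ 2 * St * cL * ∑ i ∈ Yhat, ε i + 2 * ((St : ℝ) - 1) * cL * ∑ i ∈ Yhat, ε i
    ∧ (∑ i ∈ Yhat, ((St : ℝ) + 1 - (rk i : ℝ)) * (pplus i - pminus i))
        + (∑ i ∈ Yhat, ∑ j ∈ Yhat.filter (fun j => i < j),
            (pplus i * pplus j - pminus i * pminus j))
      < 4 * St * cL * ∑ i ∈ Yhat, ε i := by
  have hclip_eq (x : ℝ) : clip x = projIcc (-R) R (by linarith) x := hclip x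
  have hgap (i : Fin K) : |pplus i - pminus i| ≤ 2 * cL * ε i := by
    rw [hpplus, hpminus, hclip_eq, hclip_eq]
    refine (abs_comp_projIcc_sub_le _ hcL.le hlip _ _).trans_eq ?_
    rw [add_sub_sub_cancel, ← two_mul, abs_of_nonneg (by linarith [hε i])]
    ring
  have habs_le_one (x : ℝ) : |p (clip x)| ≤ 1 := by
    obtain ⟨h0, h1⟩ := hp01 _ (hclip_eq x ▸ (projIcc _ _ _ x).2)
    exact abs_le.2 ⟨by linarith, h1⟩
  have hsingle : ∑ i ∈ Yhat, ((St : ℝ) + 1 - (rk i : ℝ)) * (pplus i - pminus i)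
      ≤ 2 * St * cL * ∑ i ∈ Yhat, ε i := by
    refine (sum_mul_le_of_abs_le (W := St) (fun i hi => ?_) fun i _ => hgap i).trans_eq ?_
    · have hrk_real : (1 : ℝ) ≤ rk i ∧ (rk i : ℝ) ≤ St := by exact_mod_cast hrk i hi
      constructor <;> linarith
    · rw [← mul_sum]; ring
  have hpair : ∑ i ∈ Yhat, ∑ j ∈ Yhat.filter (fun j => i < j),
        (pplus i * pplus j - pminus i * pminus j)
      ≤ 2 * ((St : ℝ) - 1) * cL * ∑ i ∈ Yhat, ε i := by
    refine (sum_sum_filter_lt_le Yhat (e := fun i => 2 * cL * ε i) fun i _ j _ => ?_).trans_eq ?_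
    · have hbound := abs_mul_sub_mul_le (b := pplus j) (c := pminus i)
        (hpplus i ▸ habs_le_one _) (hpminus j ▸ habs_le_one _)
      exact (le_abs_self _).trans <| hbound.trans <| add_le_add (hgap i) (hgap j)
    · rw [nsmul_eq_mul, hSt, Nat.cast_sub hSt1, ← mul_sum]
      push_cast
      ring
  have hSt_real : (1 : ℝ) ≤ St := by exact_mod_cast hSt1
  refine ⟨add_le_add hsingle hpair, ?_⟩
  nlinarith [mul_pos hcL hsum]

/-- one-step ranking regret bound. -/
theorem one_step_ranking_regret (K : ℕ) (hK : 1 ≤ K)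
    (R : ℝ) (hR : 0 < R)
    (cL : ℝ) (hcL : 0 < cL) (p : ℝ → ℝ)
    (hmono : MonotoneOn p (Icc (-R) R))
    (hlip : ∀ x ∈ Icc (-R) R, ∀ y ∈ Icc (-R) R, |p x - p y| ≤ cL * |x - y|)
    (hp01 : ∀ x ∈ Icc (-R) R, p x ∈ Icc (0 : ℝ) 1)
    (clip : ℝ → ℝ) (hclip : ∀ x, clip x = max (-R) (min R x))
    (Δ Δhat ε : Fin K → ℝ)
    (hΔ : ∀ i, Δ i ∈ Icc (-R) R) (hε : ∀ i, 0 ≤ ε i)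
    (happrox : ∀ i, |Δ i - Δhat i| ≤ ε i)
    (pplus pminus : Fin K → ℝ)
    (hpplus : ∀ i, pplus i = p (clip (Δhat i + ε i)))
    (hpminus : ∀ i, pminus i = p (clip (Δhat i - ε i)))
    (Yhat : Finset (Fin K)) (St : ℕ) (hSt : Yhat.card = St) (hSt1 : 1 ≤ St)
    (rk : Fin K → ℕ) (hrk : ∀ i ∈ Yhat, 1 ≤ rk i ∧ rk i ≤ St)
    (hsum : 0 < ∑ i ∈ Yhat, ε i) :
    (∑ i ∈ Yhat, ((St : ℝ) + 1 - (rk i : ℝ)) * (pplus i - pminus i))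
        + (∑ i ∈ Yhat, ∑ j ∈ Yhat.filter (fun j => i < j),
            (pplus i * pplus j - pminus i * pminus j))
      ≤ 2 * St * cL * ∑ i ∈ Yhat, ε i + 2 * ((St : ℝ) - 1) * cL * ∑ i ∈ Yhat, ε i
    ∧ (∑ i ∈ Yhat, ((St : ℝ) + 1 - (rk i : ℝ)) * (pplus i - pminus i))
        + (∑ i ∈ Yhat, ∑ j ∈ Yhat.filter (fun j => i < j),
            (pplus i * pplus j - pminus i * pminus j))
      < 4 * St * cL * ∑ i ∈ Yhat, ε i :=
  one_step_ranking_regret_general K R hR cL hcL p hlip hp01 clip hclip Δhat ε hε pplus pminus hpplus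
    hpminus Yhat St hSt hSt1 rk hrk hsum
end
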